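/- Let ε₁, ε₂ > 0 and suppose f is an isomorphism from the unit distance graph of ℝ × [0,ε₁] to that of ℝ × [0,ε₂]. Then for any two distinct points x', x'' of ℝ × [0,ε₁], the first coordinates of x' and x'' are equal if and only if the first coordinates of f(x') and f(x'') are equal. -/

import Mathlib

noncomputable section

/-- The strip `ℝ × [0, ε]` as a subset of the Euclidean plane; coordinate `0` is the
horizontal coordinate and coordinate `1` is the vertical coordinate. -/
def Strip (ε : ℝ) : Set (EuclideanSpace ℝ (Fin 2)) := {p | p 1 ∈ Set.Icc 0 ε}

/-- The unit distance graph of the strip: two points are adjacent iff their Euclidean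
distance is exactly `1`. -/
def stripGraph (ε : ℝ) : SimpleGraph (Strip ε) where
  Adj x y := dist x.1 y.1 = 1
  symm := ⟨fun x y h => by rwa [dist_comm]⟩
  loopless := ⟨fun x h => by simp at h⟩

/-- `v` lies strictly between `u` and `w` (in either order). -/
def StrictBetween (u v w : ℝ) : Prop := (u < v ∧ v < w) ∨ (w < v ∧ v < u)

def Reach {α : Type*} (G : SimpleGraph α) (u v : α) (n : ℕ) : Prop := ∃ w : G.Walk u v, w.length ≤ n

lemma reach_map {α β : Type*} {G : SimpleGraph α} {G' : SimpleGraph β} (f : G ≃g G')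
    (u v : α) (n : ℕ) : Reach G u v n → Reach G' (f u) (f v) n := by
  rintro ⟨w, hw⟩
  exact ⟨w.map f.toHom, by rwa [SimpleGraph.Walk.length_map]⟩

lemma reach_iff {α β : Type*} {G : SimpleGraph α} {G' : SimpleGraph β} (f : G ≃g G')
    (u v : α) (n : ℕ) : Reach G u v n ↔ Reach G' (f u) (f v) n := by
  refine ⟨reach_map f u v n, fun h => ?_⟩
  have := reach_map f.symm (f u) (f v) n h
  simpa using this

lemma dist_eq_one_iff (x y : EuclideanSpace ℝ (Fin 2)) :
    dist x y = 1 ↔ (x 0 - y 0)^2 + (x 1 - y 1)^2 = 1 := by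
  rw [EuclideanSpace.dist_eq, Fin.sum_univ_two]
  simp only [Real.dist_eq, sq_abs]
  constructor
  · intro h
    have h2 : (0:ℝ) ≤ (x 0 - y 0)^2 + (x 1 - y 1)^2 := by positivity
    nlinarith [Real.sq_sqrt h2]
  · intro h; rw [h, Real.sqrt_one]

variable {ε : ℝ}

lemma adj_iff (u v : Strip ε) :
    (stripGraph ε).Adj u v ↔ (u.1 0 - v.1 0)^2 + (u.1 1 - v.1 1)^2 = 1 :=
  dist_eq_one_iff _ _

lemma adj_coord0 {u v : Strip ε} (h : (stripGraph ε).Adj u v) : |u.1 0 - v.1 0| ≤ 1 := by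
  rw [adj_iff] at h
  nlinarith [sq_abs (u.1 0 - v.1 0), abs_nonneg (u.1 0 - v.1 0), sq_nonneg (u.1 1 - v.1 1)]

lemma adj_rigid {u v : Strip ε} (h : (stripGraph ε).Adj u v) (h0 : |u.1 0 - v.1 0| = 1) :
    u.1 1 = v.1 1 := by
  rw [adj_iff] at h
  have : (u.1 0 - v.1 0)^2 = 1 := by rw [← sq_abs, h0]; norm_num
  nlinarith [sq_nonneg (u.1 1 - v.1 1)]

lemma walk_coord0 {u v : Strip ε} (w : (stripGraph ε).Walk u v) :
    |v.1 0 - u.1 0| ≤ (w.length : ℝ) := by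
  induction w with
  | nil => simp
  | cons h p ih =>
    rename_i a b c
    have h1 := adj_coord0 h
    rw [SimpleGraph.Walk.length_cons]
    push_cast
    have := abs_sub_le (c.1 0) (b.1 0) (a.1 0)
    rw [abs_sub_comm (b.1 0) (a.1 0)] at this
    linarith

lemma walk_rigid {u v : Strip ε} (w : (stripGraph ε).Walk u v)
    (h : |v.1 0 - u.1 0| = (w.length : ℝ)) : u.1 1 = v.1 1 := by
  induction w with
  | nil => rfl
  | cons hadj p ih =>
    rename_i a b c
    have h1 := adj_coord0 hadj
    have h2 := walk_coord0 p
    rw [SimpleGraph.Walk.length_cons] at h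
    push_cast at h
    have habs := abs_sub_le (c.1 0) (b.1 0) (a.1 0)
    rw [abs_sub_comm (b.1 0) (a.1 0)] at habs
    have e1 : |a.1 0 - b.1 0| = 1 := by linarith
    have e2 : |c.1 0 - b.1 0| = (p.length : ℝ) := by linarith
    have := adj_rigid hadj e1
    rw [this]
    exact ih e2

lemma reach_coord0 {u v : Strip ε} {n : ℕ} (h : Reach (stripGraph ε) u v n) :
    |v.1 0 - u.1 0| ≤ (n : ℝ) := by
  obtain ⟨w, hw⟩ := h
  calc |v.1 0 - u.1 0| ≤ (w.length : ℝ) := walk_coord0 w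
  _ ≤ n := by exact_mod_cast hw

lemma reach_rigid {u v : Strip ε} {n : ℕ} (h : Reach (stripGraph ε) u v n)
    (h0 : |v.1 0 - u.1 0| = (n : ℝ)) : u.1 1 = v.1 1 := by
  obtain ⟨w, hw⟩ := h
  have hl := walk_coord0 w
  have : (w.length : ℝ) = n := by
    have : (n:ℝ) ≤ w.length := h0 ▸ hl
    have h2 : (w.length : ℝ) ≤ n := by exact_mod_cast hw
    linarith
  exact walk_rigid w (by rw [h0, this])

def pt {ε : ℝ} (a b : ℝ) (hb : b ∈ Set.Icc (0:ℝ) ε) : Strip ε := ⟨WithLp.toLp 2 ![a, b], hb⟩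
@[simp] lemma pt0 {ε a b : ℝ} (hb : b ∈ Set.Icc (0:ℝ) ε) : (pt a b hb).1 0 = a := rfl
@[simp] lemma pt1 {ε a b : ℝ} (hb : b ∈ Set.Icc (0:ℝ) ε) : (pt a b hb).1 1 = b := rfl

lemma strip_ext (u v : Strip ε) (h0 : u.1 0 = v.1 0) (h1 : u.1 1 = v.1 1) : u = v := by
  apply Subtype.ext
  ext i
  fin_cases i <;> assumption

lemma strip_mem (u : Strip ε) : u.1 1 ∈ Set.Icc (0:ℝ) ε := u.2
lemma strip_mem' (u : Strip ε) : 0 ≤ u.1 1 ∧ u.1 1 ≤ ε := u.2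

lemma reach_refl' (u : Strip ε) (n : ℕ) : Reach (stripGraph ε) u u n :=
  ⟨SimpleGraph.Walk.nil, by simp⟩

lemma reach_cons' {u v w : Strip ε} {n : ℕ} (h : (stripGraph ε).Adj u v)
    (h2 : Reach (stripGraph ε) v w n) : Reach (stripGraph ε) u w (n+1) := by
  obtain ⟨p, hp⟩ := h2
  exact ⟨SimpleGraph.Walk.cons h p, by simp; omega⟩

lemma reach_trans' {u v w : Strip ε} {m n : ℕ}
    (h1 : Reach (stripGraph ε) u v m) (h2 : Reach (stripGraph ε) v w n) :
    Reach (stripGraph ε) u w (m + n) := by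
  obtain ⟨p, hp⟩ := h1; obtain ⟨q, hq⟩ := h2
  exact ⟨p.append q, by rw [SimpleGraph.Walk.length_append]; omega⟩

/-- straight run of `n` unit steps `(dx, dy)` -/
lemma reach_run (dx dy : ℝ) (hunit : dx^2 + dy^2 = 1) :
    ∀ (n : ℕ) (u v : Strip ε),
    (∀ i : ℕ, i ≤ n → u.1 1 + i*dy ∈ Set.Icc (0:ℝ) ε) →
    v.1 0 = u.1 0 + n*dx → v.1 1 = u.1 1 + n*dy →
    Reach (stripGraph ε) u v n := by
  intro n
  induction n with
  | zero =>
    intro u v _ h0 h1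
    have : v = u := strip_ext v u (by rw [h0]; push_cast; ring) (by rw [h1]; push_cast; ring)
    rw [this]; exact reach_refl' u 0
  | succ n ih =>
    intro u v hs h0 h1
    have hmem : u.1 1 + dy ∈ Set.Icc (0:ℝ) ε := by
      have := hs 1 (by omega); simpa using this
    set a : Strip ε := pt (u.1 0 + dx) (u.1 1 + dy) hmem with ha
    have hadj : (stripGraph ε).Adj u a := by
      rw [adj_iff]; simp [ha]; ring_nf; linarith [hunit]
    have hreach : Reach (stripGraph ε) a v n := by
      apply ih a v
      · intro i hi
        have h2 := hs (i+1) (by omega)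
        have he : (a.1 1) + i*dy = u.1 1 + ((i:ℕ)+1 : ℕ)*dy := by
          simp [ha]; push_cast; ring
        rw [he]; exact h2
      · simp [ha, h0]; push_cast; ring
      · simp [ha, h1]; push_cast; ring
    exact reach_cons' hadj hreach

/-- horizontal run -/
lemma reach_horiz (n : ℕ) (u v : Strip ε) (h0 : v.1 0 = u.1 0 + n) (h1 : v.1 1 = u.1 1) :
    Reach (stripGraph ε) u v n := by
  apply reach_run 1 0 (by norm_num) n u v
  · intro i _
    have := strip_mem u
    simpa using this
  · simpa using h0
  · simpa using h1

/-- a 2-step "hop" between same-height points at horizontal distance `w`,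
    provided the bounce height `sqrt (1 - w^2/4)` fits in the strip. -/
lemma reach_hop (hε : 0 < ε) (w : ℝ) (hw0 : 0 ≤ w) (hw2 : w ≤ 2)
    (hρ : Real.sqrt (1 - w^2/4) ≤ ε/2) (u v : Strip ε)
    (h0 : v.1 0 = u.1 0 + w) (h1 : v.1 1 = u.1 1) :
    Reach (stripGraph ε) u v 2 := by
  set ρ := Real.sqrt (1 - w^2/4) with hρdef
  have hρ0 : 0 ≤ ρ := Real.sqrt_nonneg _
  have hρsq : ρ^2 = 1 - w^2/4 := Real.sq_sqrt (by nlinarith)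
  obtain ⟨hu0, hu1⟩ := strip_mem' u
  by_cases hc : u.1 1 ≤ ε/2
  · -- bounce up
    have hmem : u.1 1 + ρ ∈ Set.Icc (0:ℝ) ε := ⟨by linarith, by linarith⟩
    set a : Strip ε := pt (u.1 0 + w/2) (u.1 1 + ρ) hmem with ha
    have had1 : (stripGraph ε).Adj u a := by
      rw [adj_iff]; simp [ha]; ring_nf; nlinarith [hρsq]
    have had2 : (stripGraph ε).Adj a v := by
      rw [adj_iff]; simp [ha, h0, h1]; ring_nf; nlinarith [hρsq]
    exact reach_cons' had1 (reach_cons' had2 (reach_refl' v 0))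
  · -- bounce down
    push_neg at hc
    have hmem : u.1 1 - ρ ∈ Set.Icc (0:ℝ) ε := ⟨by linarith, by linarith⟩
    set a : Strip ε := pt (u.1 0 + w/2) (u.1 1 - ρ) hmem with ha
    have had1 : (stripGraph ε).Adj u a := by
      rw [adj_iff]; simp [ha]; ring_nf; nlinarith [hρsq]
    have had2 : (stripGraph ε).Adj a v := by
      rw [adj_iff]; simp [ha, h0, h1]; ring_nf; nlinarith [hρsq]
    exact reach_cons' had1 (reach_cons' had2 (reach_refl' v 0))

lemma reach_hops (hε : 0 < ε) (w : ℝ) (hw0 : 0 ≤ w) (hw2 : w ≤ 2)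
    (hρ : Real.sqrt (1 - w^2/4) ≤ ε/2) :
    ∀ (M : ℕ) (u v : Strip ε), v.1 0 = u.1 0 + M*w → v.1 1 = u.1 1 →
    Reach (stripGraph ε) u v (2*M) := by
  intro M
  induction M with
  | zero =>
    intro u v h0 h1
    have : v = u := strip_ext v u (by rw [h0]; push_cast; ring) h1
    rw [this]; exact reach_refl' u 0
  | succ M ih =>
    intro u v h0 h1
    set a : Strip ε := pt (u.1 0 + w) (u.1 1) (strip_mem u) with ha
    have hstep : Reach (stripGraph ε) u a 2 := reach_hop hε w hw0 hw2 hρ u a (by simp [ha]) (by simp [ha])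
    have hrest : Reach (stripGraph ε) a v (2*M) := by
      apply ih a v
      · simp [ha, h0]; push_cast; ring
      · simp [ha, h1]
    have := reach_trans' hstep hrest
    convert this using 1
    omega

lemma reach_bounces (n : ℕ) (u : Strip ε) : Reach (stripGraph ε) u u (2*n) := by
  induction n with
  | zero => exact reach_refl' u 0
  | succ n ih =>
    set a : Strip ε := pt (u.1 0 + 1) (u.1 1) (strip_mem u) with ha
    have hadj : (stripGraph ε).Adj u a := by
      rw [adj_iff]; simp [ha]
    have h2 : Reach (stripGraph ε) u u 2 :=
      reach_cons' hadj (reach_cons' hadj.symm (reach_refl' u 0))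
    have := reach_trans' h2 ih
    convert this using 1
    omega

/-- the number of hop gadgets used, depending only on `ε` -/
def Mnat (ε : ℝ) : ℕ := ⌈8/(min ε 1)^2⌉₊ + 1

lemma Mnat_pos (ε : ℝ) : 1 ≤ Mnat ε := Nat.le_add_left 1 _

lemma Mnat_big (ε : ℝ) : 8/(min ε 1)^2 ≤ (Mnat ε : ℝ) := by
  have := Nat.le_ceil (8/(min ε 1)^2)
  have h2 : ((⌈8/(min ε 1)^2⌉₊ : ℕ) : ℝ) ≤ ((Mnat ε : ℕ) : ℝ) := by
    exact_mod_cast Nat.le_succ _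
  linarith


lemma abs_sq_le {a b : ℝ} (h : |a| ≤ b) : a^2 ≤ b^2 := by
  nlinarith [abs_nonneg a, sq_abs a]

lemma le_of_sq_le {a b : ℝ} (ha : 0 ≤ a) (hb : 0 ≤ b) (h : a^2 ≤ b^2) : a ≤ b := by
  nlinarith

lemma hop_height_bound {x : ℝ} (h0 : 0 ≤ x) : 1 - (2-x)^2/4 ≤ x := by nlinarith

lemma unit_div {η q n' : ℝ} (hn' : 1 ≤ n') (hηsq : η^2 = n'^2 - q^2) :
    (η/n')^2 + (q/n')^2 = 1 := by
  have hn0 : n' ≠ 0 := by linarith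
  field_simp
  linarith

lemma convex_mem {t a b ε : ℝ} (ht0 : 0 ≤ t) (ht1 : t ≤ 1) (ha : 0 ≤ a) (ha' : a ≤ ε)
    (hb : 0 ≤ b) (hb' : b ≤ ε) : 0 ≤ (1-t)*a + t*b ∧ (1-t)*a + t*b ≤ ε := by
  constructor
  · nlinarith
  · nlinarith

lemma two_div_le {m M : ℝ} (hm : 0 < m) (hm1 : m ≤ 1) (hM : 8/m^2 ≤ M) : 2/M ≤ m^2/4 := by
  have hM0 : 0 < M := by
    have : 0 < 8/m^2 := by positivity
    linarith
  rw [div_le_div_iff₀ hM0 (by norm_num : (0:ℝ) < 4)]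
  have := (div_le_iff₀ (by positivity : (0:ℝ) < m^2)).mp hM
  nlinarith

lemma gap_lemma (n' η q D : ℝ) (h1 : 1 ≤ n') (hη0 : 0 ≤ η)
    (hηsq : η^2 = n'^2 - q^2) (hD : 0 < D) (hn'D : 2*q^2/D ≤ n') :
    n' - η ≤ D/2 := by
  have hηle : η ≤ n' := by nlinarith [sq_nonneg q]
  have hfact : (n' - η)*(n' + η) = q^2 := by nlinarith
  have h2q : 2*q^2 ≤ n'*D := by
    have := (div_le_iff₀ hD).mp hn'D
    linarith
  nlinarith [mul_nonneg hη0 hD.le, sub_nonneg.2 hηle]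

set_option maxHeartbeats 1000000 in
/-- Master construction lemma: rightward reachability with prescribed step count. -/
lemma masterR (hε : 0 < ε) (u v : Strip ε) (n : ℕ)
    (hle : u.1 0 ≤ v.1 0)
    (hD : 0 < (n:ℝ) - (v.1 0 - u.1 0))
    (hH : 2*(v.1 1 - u.1 1)^2 / ((n:ℝ) - (v.1 0 - u.1 0)) + |v.1 1 - u.1 1|
          + ((n:ℝ) - (v.1 0 - u.1 0)) + 2*(Mnat ε) + 10 ≤ (n:ℝ)) :
    Reach (stripGraph ε) u v n := by
  set o : ℝ := v.1 0 - u.1 0 with ho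
  set q : ℝ := v.1 1 - u.1 1 with hq
  set D : ℝ := (n:ℝ) - o with hDdef
  obtain ⟨n', hn'1R, hn'q, hn'D, hn'ub⟩ :
      ∃ n' : ℕ, (1:ℝ) ≤ (n':ℝ) ∧ |q| ≤ (n':ℝ) ∧ 2*q^2/D ≤ (n':ℝ) ∧
        (n':ℝ) ≤ 2*q^2/D + |q| + 3 := by
    refine ⟨⌈2*q^2/D⌉₊ + ⌈|q|⌉₊ + 1, ?_, ?_, ?_, ?_⟩
    · push_cast
      linarith [Nat.cast_nonneg' (α := ℝ) ⌈2*q^2/D⌉₊, Nat.cast_nonneg' (α := ℝ) ⌈|q|⌉₊]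
    · have h1 := Nat.le_ceil |q|
      push_cast
      linarith [Nat.cast_nonneg' (α := ℝ) ⌈2*q^2/D⌉₊]
    · have h1 := Nat.le_ceil (2*q^2/D)
      push_cast
      linarith [Nat.cast_nonneg' (α := ℝ) ⌈|q|⌉₊]
    · have h1 : (⌈2*q^2/D⌉₊:ℝ) < 2*q^2/D + 1 := Nat.ceil_lt_add_one (by positivity)
      have h2 : (⌈|q|⌉₊:ℝ) < |q| + 1 := Nat.ceil_lt_add_one (abs_nonneg q)
      push_cast
      linarith
  have hq2n' : q^2 ≤ (n':ℝ)^2 := abs_sq_le hn'q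
  set η : ℝ := Real.sqrt ((n':ℝ)^2 - q^2) with hηdef
  have hη0 : 0 ≤ η := Real.sqrt_nonneg _
  have hηsq : η^2 = (n':ℝ)^2 - q^2 := Real.sq_sqrt (by linarith)
  have hηle : η ≤ (n':ℝ) :=
    le_of_sq_le hη0 (by linarith) (by rw [hηsq]; have := sq_nonneg q; linarith)
  have hgap : (n':ℝ) - η ≤ D/2 := gap_lemma _ _ _ _ hn'1R hη0 hηsq hD hn'D
  set Drem : ℝ := D - ((n':ℝ) - η) with hDremdef
  have hDrem_lb : D/2 ≤ Drem := by rw [hDremdef]; linarith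
  have hDrem_ub : Drem ≤ D := by rw [hDremdef]; linarith
  have hDrem_pos : 0 < Drem := by linarith
  obtain ⟨b, hD₂pos, hD₂le2⟩ :
      ∃ b : ℕ, 0 < Drem - 2*(b:ℝ) ∧ Drem - 2*(b:ℝ) ≤ 2 := by
    refine ⟨⌈Drem/2⌉₊ - 1, ?_, ?_⟩
    · have hc1 : 1 ≤ ⌈Drem/2⌉₊ := Nat.one_le_ceil_iff.mpr (by linarith)
      have hcub : (⌈Drem/2⌉₊:ℝ) < Drem/2 + 1 := Nat.ceil_lt_add_one (by linarith)
      have : ((⌈Drem/2⌉₊ - 1 : ℕ):ℝ) = (⌈Drem/2⌉₊:ℝ) - 1 := by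
        push_cast [hc1]; ring
      rw [this]; linarith
    · have hc1 : 1 ≤ ⌈Drem/2⌉₊ := Nat.one_le_ceil_iff.mpr (by linarith)
      have hclb : Drem/2 ≤ (⌈Drem/2⌉₊:ℝ) := Nat.le_ceil _
      have : ((⌈Drem/2⌉₊ - 1 : ℕ):ℝ) = (⌈Drem/2⌉₊:ℝ) - 1 := by
        push_cast [hc1]; ring
      rw [this]; linarith
  set D₂ : ℝ := Drem - 2*(b:ℝ) with hD₂def
  have h2b : 2*(b:ℝ) ≤ Drem := by linarith
  have hb0 : (0:ℝ) ≤ (b:ℝ) := Nat.cast_nonneg' b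
  set M : ℕ := Mnat ε with hMdef
  have hM1 : 1 ≤ M := Mnat_pos ε
  have hM1R : (1:ℝ) ≤ (M:ℝ) := by exact_mod_cast hM1
  have hM8 : 8/(min ε 1)^2 ≤ (M:ℝ) := Mnat_big ε
  set w : ℝ := 2 - D₂/(M:ℝ) with hwdef
  have hDM : D₂/(M:ℝ) ≤ 2 := by
    have h1 : D₂/(M:ℝ) ≤ D₂/1 := by
      apply div_le_div_of_nonneg_left hD₂pos.le one_pos hM1R
    simp at h1
    linarith
  have hDMpos : 0 < D₂/(M:ℝ) := by positivity
  have hw0 : 0 ≤ w := by rw [hwdef]; linarith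
  have hw2 : w ≤ 2 := by rw [hwdef]; linarith
  have hmin0 : 0 < min ε 1 := lt_min hε one_pos
  have hρbound : Real.sqrt (1 - w^2/4) ≤ ε/2 := by
    have h1 : 1 - w^2/4 ≤ 2/(M:ℝ) := by
      have hb := hop_height_bound hDMpos.le
      have h2M : D₂/(M:ℝ) ≤ 2/(M:ℝ) := by
        apply div_le_div_of_nonneg_right hD₂le2 ?_
        linarith
      rw [hwdef]
      linarith
    have h2 : 2/(M:ℝ) ≤ (min ε 1)^2/4 := two_div_le hmin0 (min_le_right ε 1) hM8
    have h3 : Real.sqrt (1 - w^2/4) ≤ Real.sqrt ((min ε 1)^2/4) :=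
      Real.sqrt_le_sqrt (by linarith)
    have h4 : Real.sqrt ((min ε 1)^2/4) = min ε 1 / 2 := by
      rw [show (min ε 1)^2/4 = (min ε 1 / 2)^2 by ring]
      exact Real.sqrt_sq (by positivity)
    have h5 : min ε 1 / 2 ≤ ε/2 := by
      have := min_le_left ε 1; linarith
    linarith
  -- step counts
  have hcount : (n':ℝ) + 2*(M:ℝ) + 2*(b:ℝ) ≤ (n:ℝ) - 7 := by linarith
  have hcountN : n' + 2*M + 2*b ≤ n := by
    have hx : ((n' + 2*M + 2*b : ℕ):ℝ) ≤ (n:ℝ) := by push_cast; linarith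
    exact_mod_cast hx
  obtain ⟨m, hmeq⟩ : ∃ m : ℕ, n' + 2*M + 2*b + m = n := ⟨n - (n' + 2*M + 2*b), by omega⟩
  have hmR : (m:ℝ) = (n:ℝ) - (n':ℝ) - 2*(M:ℝ) - 2*(b:ℝ) := by
    have hx : ((n' + 2*M + 2*b + m : ℕ):ℝ) = (n:ℝ) := by exact_mod_cast congrArg (Nat.cast (R := ℝ)) hmeq
    push_cast at hx
    linarith
  set A : Strip ε := pt (u.1 0 + η) (v.1 1) (strip_mem v) with hAdef
  set B : Strip ε := pt (u.1 0 + η + (M:ℝ)*w) (v.1 1) (strip_mem v) with hBdef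
  obtain ⟨hu0, hu1⟩ := strip_mem' u
  obtain ⟨hv0, hv1⟩ := strip_mem' v
  have hn'0 : (n':ℝ) ≠ 0 := by linarith
  have leg1 : Reach (stripGraph ε) u A n' := by
    apply reach_run (η/(n':ℝ)) (q/(n':ℝ))
    · exact unit_div hn'1R hηsq
    · intro i hi
      have hi0 : (0:ℝ) ≤ (i:ℝ)/(n':ℝ) := by positivity
      have hi1 : (i:ℝ)/(n':ℝ) ≤ 1 := by
        rw [div_le_one (by linarith)]
        exact_mod_cast hi
      have hexp : u.1 1 + (i:ℝ)*(q/(n':ℝ))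
          = (1 - (i:ℝ)/(n':ℝ))*(u.1 1) + ((i:ℝ)/(n':ℝ))*(v.1 1) := by
        rw [hq]
        field_simp
        ring
      rw [hexp]
      exact convex_mem hi0 hi1 hu0 hu1 hv0 hv1
    · rw [hAdef]
      simp only [pt0]
      have hx : (n':ℝ)*(η/(n':ℝ)) = η := by field_simp
      rw [hx]
    · rw [hAdef]
      simp only [pt1]
      have hx : (n':ℝ)*(q/(n':ℝ)) = q := by field_simp
      rw [hx, hq]
      ring
  have leg2 : Reach (stripGraph ε) A B (2*M) := by
    apply reach_hops hε w hw0 hw2 hρbound M A B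
    · rw [hAdef, hBdef]; simp only [pt0]
    · rw [hAdef, hBdef]; simp only [pt1]
  have leg3 : Reach (stripGraph ε) B B (2*b) := reach_bounces b B
  have leg4 : Reach (stripGraph ε) B v m := by
    apply reach_horiz m B v
    · rw [hBdef]
      simp only [pt0]
      have hMw : (M:ℝ)*w = 2*(M:ℝ) - D₂ := by
        rw [hwdef]; field_simp
      rw [hMw, hmR]
      have hoD : o = (n:ℝ) - D := by rw [hDdef]; ring
      have hDsplit : D = (n':ℝ) - η + D₂ + 2*(b:ℝ) := by
        rw [hD₂def, hDremdef]; ring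
      have hvo : v.1 0 = u.1 0 + o := by rw [ho]; ring
      rw [hvo, hoD, hDsplit]
      ring
    · rw [hBdef]; simp only [pt1]
  have total := reach_trans' (reach_trans' (reach_trans' leg1 leg2) leg3) leg4
  have hfin : n' + 2*M + (2*b) + m = n := by omega
  rwa [hfin] at total

/-- reflection of the strip in a vertical axis, as a graph automorphism -/
def refIso (ε : ℝ) : stripGraph ε ≃g stripGraph ε := by
  refine ⟨⟨fun p => ⟨WithLp.toLp 2 ![-(p.1 0), p.1 1], p.2⟩, fun p => ⟨WithLp.toLp 2 ![-(p.1 0), p.1 1], p.2⟩, ?_, ?_⟩, ?_⟩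
  · intro p
    apply strip_ext <;> simp
  · intro p
    apply strip_ext <;> simp
  · intro a b
    rw [adj_iff, adj_iff]
    constructor <;> intro h <;> [skip; skip] <;>
    · have : ∀ x y : ℝ, (-x - -y)^2 = (x - y)^2 := fun x y => by ring
      simp only [Equiv.coe_fn_mk] at *
      convert h using 2 <;> simp [this] <;> ring

@[simp] lemma refIso0 (u : Strip ε) : ((refIso ε u) : Strip ε).1 0 = -(u.1 0) := rfl
@[simp] lemma refIso1 (u : Strip ε) : ((refIso ε u) : Strip ε).1 1 = u.1 1 := rfl

set_option maxHeartbeats 1000000 in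
/-- master lemma, either direction -/
lemma masterGen (hε : 0 < ε) (u v : Strip ε) (n : ℕ)
    (hD : 0 < (n:ℝ) - |v.1 0 - u.1 0|)
    (hH : 2*(v.1 1 - u.1 1)^2 / ((n:ℝ) - |v.1 0 - u.1 0|) + |v.1 1 - u.1 1|
          + ((n:ℝ) - |v.1 0 - u.1 0|) + 2*(Mnat ε) + 10 ≤ (n:ℝ)) :
    Reach (stripGraph ε) u v n := by
  by_cases hle : u.1 0 ≤ v.1 0
  · have habs : |v.1 0 - u.1 0| = v.1 0 - u.1 0 := abs_of_nonneg (by linarith)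
    rw [habs] at hD hH
    exact masterR hε u v n hle hD hH
  · push_neg at hle
    have habs : |v.1 0 - u.1 0| = u.1 0 - v.1 0 := abs_of_nonpos (by linarith) |>.trans (by ring)
    rw [habs] at hD hH
    rw [reach_iff (refIso ε)]
    apply masterR hε _ _ n
    · simp; linarith
    · simp only [refIso0, refIso1]
      convert hD using 2 <;> ring
    · simp only [refIso0, refIso1]
      have e1 : -(v.1 0) - -(u.1 0) = u.1 0 - v.1 0 := by ring
      rw [e1]
      exact hH

/-- the detour constant -/
def Cdet (ε : ℝ) : ℝ := 2*ε^2 + 2*ε + 4*(Mnat ε) + 60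

lemma Cdet_pos (hε : 0 < ε) : 0 < Cdet ε := by
  have : (0:ℝ) ≤ (Mnat ε : ℝ) := Nat.cast_nonneg' _
  unfold Cdet; nlinarith

set_option maxHeartbeats 1000000 in
/-- universal "loose" upper bound: anything at horizontal distance `o` is reachable in
any number of steps `≥ o + Cdet ε`. -/
lemma detourR (hε : 0 < ε) (u v : Strip ε) (n : ℕ) (hle : u.1 0 ≤ v.1 0)
    (hn : |v.1 0 - u.1 0| + Cdet ε ≤ (n:ℝ)) :
    Reach (stripGraph ε) u v n := by
  set o : ℝ := v.1 0 - u.1 0 with ho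
  have ho0 : 0 ≤ o := by rw [ho]; linarith
  have habs : |v.1 0 - u.1 0| = o := abs_of_nonneg ho0
  rw [habs] at hn
  set q : ℝ := v.1 1 - u.1 1 with hq
  obtain ⟨hu0, hu1⟩ := strip_mem' u
  obtain ⟨hv0, hv1⟩ := strip_mem' v
  have hqε : |q| ≤ ε := by rw [hq, abs_le]; constructor <;> linarith
  have hM1R : (1:ℝ) ≤ (Mnat ε : ℝ) := by exact_mod_cast Mnat_pos ε
  have hC : Cdet ε = 2*ε^2 + 2*ε + 4*(Mnat ε) + 60 := rfl
  -- choose the turning point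
  set R : ℕ := ⌊((n:ℝ) + o)/2⌋₊ - 1 with hRdef
  have hfl1 : 1 ≤ ⌊((n:ℝ) + o)/2⌋₊ := by
    apply Nat.le_floor
    have : (0:ℝ) ≤ (Mnat ε : ℝ) := Nat.cast_nonneg' _
    push_cast
    nlinarith
  have hRcast : (R:ℝ) = (⌊((n:ℝ) + o)/2⌋₊ : ℝ) - 1 := by
    rw [hRdef]; push_cast [hfl1]; ring
  have hfl_le : (⌊((n:ℝ) + o)/2⌋₊ : ℝ) ≤ ((n:ℝ) + o)/2 := Nat.floor_le (by positivity)
  have hfl_gt : ((n:ℝ) + o)/2 < (⌊((n:ℝ) + o)/2⌋₊ : ℝ) + 1 := Nat.lt_floor_add_one _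
  have hRub : (R:ℝ) ≤ ((n:ℝ) + o)/2 - 1 := by rw [hRcast]; linarith
  have hRlb : ((n:ℝ) + o)/2 - 2 < (R:ℝ) := by rw [hRcast]; linarith
  have hRge_o : o ≤ (R:ℝ) := by
    have : (0:ℝ) ≤ (Mnat ε:ℝ) := Nat.cast_nonneg' _
    nlinarith
  have hRn : R ≤ n := by
    have hx : (R:ℝ) ≤ (n:ℝ) := by
      have : (0:ℝ) ≤ (Mnat ε:ℝ) := Nat.cast_nonneg' _
      nlinarith
    exact_mod_cast hx
  set P : Strip ε := pt (u.1 0 + R) (u.1 1) (strip_mem u) with hP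
  have leg1 : Reach (stripGraph ε) u P R := reach_horiz R u P (by simp [hP]) (by simp [hP])
  have leg2 : Reach (stripGraph ε) P v (n - R) := by
    apply masterGen hε P v (n - R)
    · have hcast : ((n - R : ℕ):ℝ) = (n:ℝ) - (R:ℝ) := by push_cast [hRn]; ring
      have habs2 : |v.1 0 - P.1 0| = (R:ℝ) - o := by
        rw [hP]; simp only [pt0]
        have h1 : v.1 0 - (u.1 0 + (R:ℝ)) = -(((R:ℝ)) - o) := by rw [ho]; ring
        rw [h1, abs_neg, abs_of_nonneg (sub_nonneg.mpr hRge_o)]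
      rw [hcast, habs2]
      linarith
    · have hcast : ((n - R : ℕ):ℝ) = (n:ℝ) - (R:ℝ) := by push_cast [hRn]; ring
      have habs2 : |v.1 0 - P.1 0| = (R:ℝ) - o := by
        rw [hP]; simp only [pt0]
        have h1 : v.1 0 - (u.1 0 + (R:ℝ)) = -(((R:ℝ)) - o) := by rw [ho]; ring
        rw [h1, abs_neg, abs_of_nonneg (sub_nonneg.mpr hRge_o)]
      have hq2 : v.1 1 - P.1 1 = q := rfl
      rw [hcast, habs2, hq2]
      clear_value P R q o
      -- D' := (n - R) - (R - o) ∈ (2, 4]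
      set D' : ℝ := ((n:ℝ) - R) - ((R:ℝ) - o) with hD'
      have hD'lb : 2 ≤ D' := by rw [hD']; linarith
      have hD'ub : D' ≤ 4 := by rw [hD']; linarith
      have hdiv : 2*q^2/D' ≤ q^2 := by
        rw [div_le_iff₀ (by linarith)]
        nlinarith [sq_nonneg q]
      have hq2e : q^2 ≤ ε^2 := by nlinarith [abs_nonneg q, sq_abs q, hqε]
      have hnR : (n:ℝ) - (R:ℝ) ≥ (n - o)/2 + 1 := by linarith
      have hfin : (n:ℝ) - o ≥ Cdet ε := by linarith
      rw [hC] at hfin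
      have hX : 2*q^2/D' + |q| + D' + 2*((Mnat ε : ℕ):ℝ) + 10
          ≤ ε^2 + ε + 4 + 2*((Mnat ε : ℕ):ℝ) + 10 := by linarith
      have hY : ε^2 + ε + 4 + 2*((Mnat ε : ℕ):ℝ) + 10 ≤ (n:ℝ) - (R:ℝ) := by linarith
      linarith
  have total := reach_trans' leg1 leg2
  have : R + (n - R) = n := by omega
  rwa [this] at total

set_option maxHeartbeats 1000000 in
lemma detour (hε : 0 < ε) (u v : Strip ε) (n : ℕ)
    (hn : |v.1 0 - u.1 0| + Cdet ε ≤ (n:ℝ)) :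
    Reach (stripGraph ε) u v n := by
  by_cases hle : u.1 0 ≤ v.1 0
  · exact detourR hε u v n hle hn
  · push_neg at hle
    rw [reach_iff (refIso ε)]
    apply detourR hε _ _ n
    · simp; linarith
    · simp only [refIso0, refIso1]
      have : -(v.1 0) - -(u.1 0) = -(v.1 0 - u.1 0) := by ring
      rw [this, abs_neg]
      exact hn

/-- The graph-theoretic "verticality" invariant. -/
def Vert {α : Type*} (G : SimpleGraph α) (x y : α) : Prop :=
  x ≠ y ∧ ∀ k : ℕ, ∃ n n' : ℕ, ∃ z z' : α,
    k ≤ n ∧ k ≤ n' ∧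
    Reach G x z n ∧ ¬ Reach G x z (n-1) ∧
    Reach G x z' n' ∧ ¬ Reach G x z' (n'-1) ∧
    ¬ Reach G z z' (n + n' - 1) ∧
    Reach G y z (n+1) ∧ ¬ Reach G y z n ∧
    Reach G y z' (n'+1) ∧ ¬ Reach G y z' n'

lemma vert_map {α β : Type*} {G : SimpleGraph α} {G' : SimpleGraph β} (f : G ≃g G')
    {x y : α} (h : Vert G x y) : Vert G' (f x) (f y) := by
  obtain ⟨hne, h⟩ := h
  refine ⟨fun he => hne (f.toEquiv.injective he), fun k => ?_⟩
  obtain ⟨n, n', z, z', h1, h2, h3, h4, h5, h6, h7, h8, h9, h10, h11⟩ := h k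
  refine ⟨n, n', f z, f z', h1, h2, ?_, ?_, ?_, ?_, ?_, ?_, ?_, ?_, ?_⟩
  · exact (reach_iff f _ _ _).mp h3
  · exact fun hr => h4 ((reach_iff f _ _ _).mpr hr)
  · exact (reach_iff f _ _ _).mp h5
  · exact fun hr => h6 ((reach_iff f _ _ _).mpr hr)
  · exact fun hr => h7 ((reach_iff f _ _ _).mpr hr)
  · exact (reach_iff f _ _ _).mp h8
  · exact fun hr => h9 ((reach_iff f _ _ _).mpr hr)
  · exact (reach_iff f _ _ _).mp h10
  · exact fun hr => h11 ((reach_iff f _ _ _).mpr hr)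

lemma vert_iff {α β : Type*} {G : SimpleGraph α} {G' : SimpleGraph β} (f : G ≃g G')
    (x y : α) : Vert G x y ↔ Vert G' (f x) (f y) := by
  refine ⟨vert_map f, fun h => ?_⟩
  have := vert_map f.symm h
  simpa using this

lemma not_reach_of_far {u v : Strip ε} {m : ℕ} (h : (m:ℝ) < |v.1 0 - u.1 0|) :
    ¬ Reach (stripGraph ε) u v m := fun hr => absurd (reach_coord0 hr) (not_le.mpr h)

/-- leftward horizontal run -/
lemma reach_horizL (n : ℕ) (u v : Strip ε) (h0 : v.1 0 = u.1 0 - n) (h1 : v.1 1 = u.1 1) :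
    Reach (stripGraph ε) u v n := by
  rw [reach_iff (refIso ε)]
  apply reach_horiz n
  · simp only [refIso0]; rw [h0]; ring
  · simp only [refIso1]; exact h1

set_option maxHeartbeats 1000000 in
lemma char_forward (hε : 0 < ε) (x y : Strip ε) (hne : x ≠ y) (h0 : x.1 0 = y.1 0) :
    Vert (stripGraph ε) x y := by
  have hbc : x.1 1 ≠ y.1 1 := fun h => hne (strip_ext x y h0 h)
  obtain ⟨hxa, hxb⟩ := strip_mem' x
  obtain ⟨hya, hyb⟩ := strip_mem' y
  have hqε : |x.1 1 - y.1 1| ≤ ε := by rw [abs_le]; constructor <;> linarith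
  have hq2 : (x.1 1 - y.1 1)^2 ≤ ε^2 := by
    nlinarith [abs_nonneg (x.1 1 - y.1 1), sq_abs (x.1 1 - y.1 1)]
  refine ⟨hne, fun k => ?_⟩
  obtain ⟨N, hN1, hNk, hNbig⟩ : ∃ N : ℕ, 1 ≤ N ∧ k ≤ N ∧
      2*ε^2 + ε + 2*((Mnat ε:ℕ):ℝ) + 20 ≤ (N:ℝ) := by
    refine ⟨k + ⌈2*ε^2 + ε + 2*((Mnat ε:ℕ):ℝ) + 20⌉₊ + 1, by omega, by omega, ?_⟩
    have h1 := Nat.le_ceil (2*ε^2 + ε + 2*((Mnat ε:ℕ):ℝ) + 20)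
    have h2 : ((⌈2*ε^2 + ε + 2*((Mnat ε:ℕ):ℝ) + 20⌉₊ : ℕ):ℝ)
        ≤ ((k + ⌈2*ε^2 + ε + 2*((Mnat ε:ℕ):ℝ) + 20⌉₊ + 1 : ℕ):ℝ) := by
      exact_mod_cast (by omega : ⌈2*ε^2 + ε + 2*((Mnat ε:ℕ):ℝ) + 20⌉₊ ≤ k + ⌈2*ε^2 + ε + 2*((Mnat ε:ℕ):ℝ) + 20⌉₊ + 1)
    linarith
  have hM0 : (0:ℝ) ≤ ((Mnat ε:ℕ):ℝ) := Nat.cast_nonneg' _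
  have hNR1 : (1:ℝ) ≤ (N:ℝ) := by exact_mod_cast hN1
  set z : Strip ε := pt (x.1 0 + N) (x.1 1) (strip_mem x) with hz
  set z' : Strip ε := pt (x.1 0 - N) (x.1 1) (strip_mem x) with hz'
  have habsz : |z.1 0 - x.1 0| = (N:ℝ) := by
    rw [hz]; simp only [pt0]
    rw [show x.1 0 + (N:ℝ) - x.1 0 = (N:ℝ) by ring]
    exact abs_of_nonneg (by linarith)
  have habsz' : |z'.1 0 - x.1 0| = (N:ℝ) := by
    rw [hz']; simp only [pt0]
    rw [show x.1 0 - (N:ℝ) - x.1 0 = -(N:ℝ) by ring, abs_neg]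
    exact abs_of_nonneg (by linarith)
  have habszy : |z.1 0 - y.1 0| = (N:ℝ) := by rw [← h0]; exact habsz
  have habszy' : |z'.1 0 - y.1 0| = (N:ℝ) := by rw [← h0]; exact habsz'
  have hcastN1 : ((N - 1 : ℕ):ℝ) = (N:ℝ) - 1 := by push_cast [hN1]; ring
  refine ⟨N, N, z, z', hNk, hNk, ?_, ?_, ?_, ?_, ?_, ?_, ?_, ?_, ?_⟩
  · exact reach_horiz N x z (by rw [hz]; simp only [pt0]) (by rw [hz]; simp only [pt1])
  · apply not_reach_of_far
    rw [habsz, hcastN1]; linarith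
  · exact reach_horizL N x z' (by rw [hz']; simp only [pt0]) (by rw [hz']; simp only [pt1])
  · apply not_reach_of_far
    rw [habsz', hcastN1]; linarith
  · apply not_reach_of_far
    have : |z'.1 0 - z.1 0| = 2*(N:ℝ) := by
      rw [hz, hz']; simp only [pt0]
      rw [show x.1 0 - (N:ℝ) - (x.1 0 + (N:ℝ)) = -(2*(N:ℝ)) by ring, abs_neg]
      exact abs_of_nonneg (by linarith)
    rw [this]
    have hcast2 : ((N + N - 1 : ℕ):ℝ) = 2*(N:ℝ) - 1 := by
      rw [Nat.cast_sub (by omega : 1 ≤ N + N)]; push_cast; ring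
    rw [hcast2]; linarith
  · -- Reach y z (N+1)
    apply masterGen hε
    · rw [habszy]; push_cast; linarith
    · rw [habszy]
      have hD1 : ((N+1 : ℕ):ℝ) - (N:ℝ) = 1 := by push_cast; ring
      push_cast
      rw [show (N:ℝ) + 1 - (N:ℝ) = 1 by ring]
      have hq2' : (z.1 1 - y.1 1)^2 ≤ ε^2 := by rw [hz]; simp only [pt1]; exact hq2
      have hqε' : |z.1 1 - y.1 1| ≤ ε := by rw [hz]; simp only [pt1]; exact hqε
      rw [div_one]
      linarith
  · -- ¬ Reach y z N
    intro hr
    have := reach_rigid hr habszy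
    rw [hz] at this; simp only [pt1] at this
    exact hbc (by linarith [this])
  · -- Reach y z' (N+1)
    apply masterGen hε
    · rw [habszy']; push_cast; linarith
    · rw [habszy']
      push_cast
      rw [show (N:ℝ) + 1 - (N:ℝ) = 1 by ring]
      have hq2' : (z'.1 1 - y.1 1)^2 ≤ ε^2 := by rw [hz']; simp only [pt1]; exact hq2
      have hqε' : |z'.1 1 - y.1 1| ≤ ε := by rw [hz']; simp only [pt1]; exact hqε
      rw [div_one]
      linarith
  · intro hr
    have := reach_rigid hr habszy'
    rw [hz'] at this; simp only [pt1] at this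
    exact hbc (by linarith [this])

set_option maxHeartbeats 1000000 in
/-- If `y` lies strictly to the right of `x`, and `z` is an `n`-tight point of `x`
on the right side, then `y` reaches `z` within `n` steps. -/
lemma converse_aux (hε : 0 < ε) (x y z : Strip ε) (n : ℕ)
    (hδ : 0 < y.1 0 - x.1 0)
    (hside : 0 < z.1 0 - x.1 0)
    (hr : Reach (stripGraph ε) x z n)
    (hnr : ¬ Reach (stripGraph ε) x z (n-1))
    (hbig : 2*ε^2/(y.1 0 - x.1 0) + ε + (Cdet ε + 1 + (y.1 0 - x.1 0))
            + 2*((Mnat ε:ℕ):ℝ) + 10 ≤ (n:ℝ)) :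
    Reach (stripGraph ε) y z n := by
  have hC := Cdet_pos hε
  have hM0 : (0:ℝ) ≤ ((Mnat ε:ℕ):ℝ) := Nat.cast_nonneg' _
  have hdivpos : 0 < 2*ε^2/(y.1 0 - x.1 0) := by positivity
  have hnR : (11:ℝ) ≤ (n:ℝ) := by linarith
  have hn1 : 1 ≤ n := by exact_mod_cast (by linarith : (1:ℝ) ≤ (n:ℝ))
  have hcastn1 : ((n-1 : ℕ):ℝ) = (n:ℝ) - 1 := by
    rw [Nat.cast_sub hn1]; push_cast; ring
  have hub : z.1 0 - x.1 0 ≤ (n:ℝ) := by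
    have := reach_coord0 hr
    have h2 : z.1 0 - x.1 0 ≤ |z.1 0 - x.1 0| := le_abs_self _
    linarith
  have hlb : (n:ℝ) - 1 - Cdet ε < z.1 0 - x.1 0 := by
    by_contra hcon
    push_neg at hcon
    apply hnr
    apply detour hε x z (n-1)
    rw [hcastn1, abs_of_pos hside]
    linarith
  have hδh : y.1 0 - x.1 0 ≤ z.1 0 - x.1 0 := by linarith
  have habs : |z.1 0 - y.1 0| = (z.1 0 - x.1 0) - (y.1 0 - x.1 0) := by
    rw [show z.1 0 - y.1 0 = (z.1 0 - x.1 0) - (y.1 0 - x.1 0) by ring]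
    exact abs_of_nonneg (by linarith)
  apply masterGen hε y z n
  · rw [habs]; linarith
  · rw [habs]
    obtain ⟨hya, hyb⟩ := strip_mem' y
    obtain ⟨hza, hzb⟩ := strip_mem' z
    have hqε : |z.1 1 - y.1 1| ≤ ε := by rw [abs_le]; constructor <;> linarith
    have hq2 : (z.1 1 - y.1 1)^2 ≤ ε^2 := by
      nlinarith [abs_nonneg (z.1 1 - y.1 1), sq_abs (z.1 1 - y.1 1)]
    set δ : ℝ := y.1 0 - x.1 0 with hδdef
    set D : ℝ := (n:ℝ) - ((z.1 0 - x.1 0) - (y.1 0 - x.1 0)) with hD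
    have hDδ : δ ≤ D := by rw [hD, hδdef]; linarith
    have hDub : D ≤ Cdet ε + 1 + δ := by rw [hD, hδdef]; linarith
    have hdiv1 : 2*(z.1 1 - y.1 1)^2/D ≤ 2*(z.1 1 - y.1 1)^2/δ :=
      div_le_div_of_nonneg_left (by positivity) hδ hDδ
    have hdiv2 : 2*(z.1 1 - y.1 1)^2/δ ≤ 2*ε^2/δ :=
      (div_le_div_iff_of_pos_right hδ).mpr (by linarith)
    clear_value δ D
    linarith

set_option maxHeartbeats 1000000 in
lemma char_backward (hε : 0 < ε) (x y : Strip ε)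
    (hv : Vert (stripGraph ε) x y) : x.1 0 = y.1 0 := by
  by_contra hδne
  have hC := Cdet_pos hε
  have hM0 : (0:ℝ) ≤ ((Mnat ε:ℕ):ℝ) := Nat.cast_nonneg' _
  have hδabs : 0 < |y.1 0 - x.1 0| := by
    apply abs_pos.mpr
    intro h
    exact hδne (by linarith [sub_eq_zero.mp h])
  set B : ℝ := 2*ε^2/|y.1 0 - x.1 0| + ε + (Cdet ε + 1 + |y.1 0 - x.1 0|)
      + 2*((Mnat ε:ℕ):ℝ) + 10 with hB
  have hBpos : 0 < B := by rw [hB]; positivity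
  obtain ⟨K, hK⟩ : ∃ K : ℕ, B + Cdet ε + 2 ≤ (K:ℝ) :=
    ⟨⌈B + Cdet ε + 2⌉₊, Nat.le_ceil _⟩
  obtain ⟨n, n', z, z', hkn, hkn', h3, h4, h5, h6, h7, h8, h9, h10, h11⟩ := hv.2 K
  have hknR : (K:ℝ) ≤ (n:ℝ) := by exact_mod_cast hkn
  have hknR' : (K:ℝ) ≤ (n':ℝ) := by exact_mod_cast hkn'
  have hBn : B + Cdet ε + 2 ≤ (n:ℝ) := by linarith
  have hBn' : B + Cdet ε + 2 ≤ (n':ℝ) := by linarith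
  have hn1 : 1 ≤ n := by exact_mod_cast (by linarith : (1:ℝ) ≤ (n:ℝ))
  have hn1' : 1 ≤ n' := by exact_mod_cast (by linarith : (1:ℝ) ≤ (n':ℝ))
  have hcastn1 : ((n-1 : ℕ):ℝ) = (n:ℝ) - 1 := by
    rw [Nat.cast_sub hn1]; push_cast; ring
  have hcastn1' : ((n'-1 : ℕ):ℝ) = (n':ℝ) - 1 := by
    rw [Nat.cast_sub hn1']; push_cast; ring
  -- tightness of z and z'
  have hs_ub : |z.1 0 - x.1 0| ≤ (n:ℝ) := reach_coord0 h3
  have hs_ub' : |z'.1 0 - x.1 0| ≤ (n':ℝ) := reach_coord0 h5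
  have hs_lb : (n:ℝ) - 1 - Cdet ε < |z.1 0 - x.1 0| := by
    by_contra hcon
    push_neg at hcon
    exact h4 (detour hε x z (n-1) (by rw [hcastn1]; linarith))
  have hs_lb' : (n':ℝ) - 1 - Cdet ε < |z'.1 0 - x.1 0| := by
    by_contra hcon
    push_neg at hcon
    exact h6 (detour hε x z' (n'-1) (by rw [hcastn1']; linarith))
  have hspos : 0 < |z.1 0 - x.1 0| := by linarith
  have hspos' : 0 < |z'.1 0 - x.1 0| := by linarith
  -- z and z' are on opposite sides of x
  have hopp : (z.1 0 - x.1 0) * (z'.1 0 - x.1 0) < 0 := by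
    by_contra hcon
    push_neg at hcon
    apply h7
    have hcastnn' : ((n + n' - 1 : ℕ):ℝ) = (n:ℝ) + (n':ℝ) - 1 := by
      rw [Nat.cast_sub (by omega : 1 ≤ n + n')]; push_cast; ring
    apply detour hε z z' (n + n' - 1)
    rw [hcastnn']
    -- same side: |z' - z| ≤ max |s| |s'|
    have hmax : |z'.1 0 - z.1 0| ≤ max (|z.1 0 - x.1 0|) (|z'.1 0 - x.1 0|) := by
      set s : ℝ := z.1 0 - x.1 0 with hs
      set s' : ℝ := z'.1 0 - x.1 0 with hs'
      have hzz : z'.1 0 - z.1 0 = s' - s := by rw [hs, hs']; ring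
      rw [hzz]
      rcases le_or_gt 0 s with hc1 | hc1 <;> rcases le_or_gt 0 s' with hc2 | hc2
      · rw [abs_of_nonneg hc1, abs_of_nonneg hc2, abs_le]
        constructor
        · have := le_max_left s s'; linarith
        · have := le_max_right s s'; linarith
      · exfalso
        rcases hc1.lt_or_eq with hlt | heq
        · nlinarith [mul_neg_of_pos_of_neg hlt hc2]
        · rw [← heq] at hspos; simp at hspos
      · exfalso
        rcases hc2.lt_or_eq with hlt | heq
        · nlinarith [mul_neg_of_neg_of_pos hc1 hlt]
        · rw [← heq] at hspos'; simp at hspos'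
      · rw [abs_of_nonpos hc1.le, abs_of_nonpos hc2.le, abs_le]
        constructor
        · have := le_max_right (-s) (-s'); linarith
        · have := le_max_left (-s) (-s'); linarith
    have hmaxle : max (|z.1 0 - x.1 0|) (|z'.1 0 - x.1 0|) ≤ max (n:ℝ) (n':ℝ) :=
      max_le_max hs_ub hs_ub'
    have hminmax : max (n:ℝ) (n':ℝ) + min (n:ℝ) (n':ℝ) = (n:ℝ) + (n':ℝ) := max_add_min _ _
    have hminlb : Cdet ε + 1 ≤ min (n:ℝ) (n':ℝ) := le_min (by linarith) (by linarith)
    linarith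
  -- now split on the sign of δ
  rcases lt_or_gt_of_ne (fun h : y.1 0 = x.1 0 => hδne h.symm) with hδ | hδ
  · -- y.1 0 < x.1 0 : use reflection and the left-side point
    have hδpos : 0 < x.1 0 - y.1 0 := by linarith
    have habsδ : |y.1 0 - x.1 0| = x.1 0 - y.1 0 := by
      rw [abs_of_neg (by linarith)]; ring
    rcases lt_or_gt_of_ne (fun h : z.1 0 - x.1 0 = 0 => by simp [h] at hopp) with hzs | hzs
    · -- z is on the left: reflect and use z
      apply h9
      rw [reach_iff (refIso ε)]
      apply converse_aux hε (refIso ε x) (refIso ε y) (refIso ε z) n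
      · simp only [refIso0]; linarith
      · simp only [refIso0]; linarith
      · exact (reach_iff (refIso ε) _ _ _).mp h3
      · intro hrr
        exact h4 ((reach_iff (refIso ε) _ _ _).mpr hrr)
      · simp only [refIso0]
        rw [show -(y.1 0) - -(x.1 0) = x.1 0 - y.1 0 by ring]
        rw [hB, habsδ] at hBn
        linarith
    · -- z' is on the left (since opposite signs): reflect and use z'
      have hzs' : z'.1 0 - x.1 0 < 0 := by nlinarith
      apply h11
      rw [reach_iff (refIso ε)]
      apply converse_aux hε (refIso ε x) (refIso ε y) (refIso ε z') n'
      · simp only [refIso0]; linarith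
      · simp only [refIso0]; linarith
      · exact (reach_iff (refIso ε) _ _ _).mp h5
      · intro hrr
        exact h6 ((reach_iff (refIso ε) _ _ _).mpr hrr)
      · simp only [refIso0]
        rw [show -(y.1 0) - -(x.1 0) = x.1 0 - y.1 0 by ring]
        rw [hB, habsδ] at hBn'
        linarith
  · -- x.1 0 < y.1 0 : use the right-side point directly
    have hδpos : 0 < y.1 0 - x.1 0 := by linarith
    have habsδ : |y.1 0 - x.1 0| = y.1 0 - x.1 0 := abs_of_pos hδpos
    rcases lt_or_gt_of_ne (fun h : z.1 0 - x.1 0 = 0 => by simp [h] at hopp) with hzs | hzs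
    · -- z is on the left, so z' is on the right: use z'
      have hzs' : 0 < z'.1 0 - x.1 0 := by nlinarith
      apply h11
      apply converse_aux hε x y z' n' hδpos hzs' h5 h6
      rw [hB, habsδ] at hBn'
      linarith
    · -- z is on the right: use z
      apply h9
      apply converse_aux hε x y z n hδpos hzs h3 h4
      rw [hB, habsδ] at hBn
      linarith


/-- An isomorphism of the unit distance graphs of two strips preserves verticality:
two distinct points have equal first coordinates iff their images do. -/
theorem strip_iso_preserves_vertical (ε₁ ε₂ : ℝ) (hε₁ : 0 < ε₁) (hε₂ : 0 < ε₂)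
    (f : stripGraph ε₁ ≃g stripGraph ε₂) (x' x'' : Strip ε₁) (h : x' ≠ x'') :
    x'.1 0 = x''.1 0 ↔ (f x').1 0 = (f x'').1 0 := by
  have hne2 : f x' ≠ f x'' := fun he => h (f.toEquiv.injective he)
  constructor
  · intro h0
    exact char_backward hε₂ _ _ (vert_map f (char_forward hε₁ x' x'' h h0))
  · intro h0
    exact char_backward hε₁ x' x'' ((vert_iff f _ _).mpr (char_forward hε₂ _ _ hne2 h0))
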